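/- Let x₀ > 0 and α ∈ (−π/2, π/2), and let P_α(t) = (x₀ cos t + x₀ cos α sin t, x₀ sin α sin t). Define F_α = (x₀ √(cos α (1 + cos α)), x₀ sin α √(cos α)/√(1 + cos α)). Then for every t, dist(P_α(t), F_α) + dist(P_α(t), −F_α) = 2x₀√(1 + cos α); that is, F_α and −F_α are the foci of the orbit and the sum of focal distances is twice the semi-major axis x₀√(1 + cos α). -/

import Mathlib

/-!
The orbit point `p` and the candidate focus `f` satisfy `⟪p, f⟫ = a k` and
`‖p‖² + ‖f‖² = a² + k²` with `a = x₀ √(1 + cos α)` and `k = x₀ √(cos α) (cos t + sin t)`.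
Expanding `‖p ∓ f‖²` then gives the perfect squares `(a ∓ k)²`, and `|k| ≤ a`, so the two
focal distances are `a - k` and `a + k`.
-/

open Real

noncomputable def pt (a b : ℝ) : EuclideanSpace ℝ (Fin 2) := WithLp.toLp 2 ![a, b]

open scoped RealInnerProductSpace

section Foci

variable {E : Type*} [NormedAddCommGroup E] [InnerProductSpace ℝ E]

theorem dist_eq_sub_of_inner_eq_mul {p f : E} {a k : ℝ} (hinner : ⟪p, f⟫ = a * k)
    (hnorm : ‖p‖ ^ 2 + ‖f‖ ^ 2 = a ^ 2 + k ^ 2) (hk : k ≤ a) : dist p f = a - k := by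
  have hsq : ‖p - f‖ ^ 2 = (a - k) ^ 2 := by
    rw [norm_sub_sq_real, hinner]
    linear_combination hnorm
  rw [dist_eq_norm]
  exact (sq_eq_sq₀ (norm_nonneg _) (sub_nonneg.2 hk)).1 hsq

theorem dist_add_dist_neg_eq_of_inner_eq_mul {p f : E} {a k : ℝ} (hinner : ⟪p, f⟫ = a * k)
    (hnorm : ‖p‖ ^ 2 + ‖f‖ ^ 2 = a ^ 2 + k ^ 2) (hk : |k| ≤ a) :
    dist p f + dist p (-f) = 2 * a := by
  have hneg : dist p (-f) = a - -k :=
    dist_eq_sub_of_inner_eq_mul (by rw [inner_neg_right, hinner, mul_neg])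
      (by rw [norm_neg, neg_sq, hnorm]) (neg_le.1 (abs_le.1 hk).1)
  rw [dist_eq_sub_of_inner_eq_mul hinner hnorm (le_of_abs_le hk), hneg]
  ring

end Foci

theorem inner_pt (a b c d : ℝ) : ⟪pt a b, pt c d⟫ = a * c + b * d := by
  simp [pt, PiLp.inner_apply, Fin.sum_univ_two, mul_comm]

theorem norm_pt_sq (a b : ℝ) : ‖pt a b‖ ^ 2 = a ^ 2 + b ^ 2 := by
  rw [← real_inner_self_eq_norm_sq, inner_pt]
  ring

noncomputable def orbit (x₀ α t : ℝ) : EuclideanSpace ℝ (Fin 2) :=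
  pt (x₀ * cos t + x₀ * cos α * sin t) (x₀ * sin α * sin t)

noncomputable def focus (x₀ α : ℝ) : EuclideanSpace ℝ (Fin 2) :=
  pt (x₀ * √(cos α * (1 + cos α))) (x₀ * sin α * √(cos α) / √(1 + cos α))

section Orbit

variable {x₀ α : ℝ}

theorem inner_orbit_focus (hc : 0 ≤ cos α) (t : ℝ) :
    ⟪orbit x₀ α t, focus x₀ α⟫ = x₀ * √(1 + cos α) * (x₀ * √(cos α) * (cos t + sin t)) := by
  have hv : √(1 + cos α) ^ 2 = 1 + cos α := sq_sqrt (by linarith)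
  have hv0 : √(1 + cos α) ≠ 0 := (sqrt_pos.2 (by linarith)).ne'
  rw [orbit, focus, inner_pt, sqrt_mul hc]
  field_simp
  rw [hv]
  linear_combination (x₀ ^ 2 * √(cos α) * sin t) * sin_sq_add_cos_sq α

theorem norm_orbit_sq_add_norm_focus_sq (hc : 0 ≤ cos α) (t : ℝ) :
    ‖orbit x₀ α t‖ ^ 2 + ‖focus x₀ α‖ ^ 2 =
      (x₀ * √(1 + cos α)) ^ 2 + (x₀ * √(cos α) * (cos t + sin t)) ^ 2 := by
  have hu : √(cos α) ^ 2 = cos α := sq_sqrt hc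
  have hv : √(1 + cos α) ^ 2 = 1 + cos α := sq_sqrt (by linarith)
  have hv0 : √(1 + cos α) ≠ 0 := (sqrt_pos.2 (by linarith)).ne'
  rw [orbit, focus, norm_pt_sq, norm_pt_sq, sqrt_mul hc]
  field_simp
  simp only [hu, hv]
  linear_combination (x₀ ^ 2 * cos α * (√(1 + cos α) ^ 2 + 1 + cos α)) * hv +
    (x₀ ^ 2 * (sin t ^ 2 * (1 + cos α) + cos α)) * sin_sq_add_cos_sq α +
    (x₀ ^ 2 * (1 - cos α ^ 2)) * cos_sq_add_sin_sq t

theorem abs_focal_offset_le (hx₀ : 0 ≤ x₀) (hc : 0 ≤ cos α) (t : ℝ) :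
    |x₀ * √(cos α) * (cos t + sin t)| ≤ x₀ * √(1 + cos α) := by
  rw [mul_assoc, abs_mul, abs_of_nonneg hx₀]
  refine mul_le_mul_of_nonneg_left (abs_le_sqrt ?_) hx₀
  rw [mul_pow, sq_sqrt hc]
  nlinarith [cos_le_one α, sq_nonneg (cos t - sin t), cos_sq_add_sin_sq t]

end Orbit

/-- A two-dimensional free harmonic oscillator with frequency `ω = 1`, initial position
`(x₀, 0)` (with `x₀ > 0`), initial speed `v₀ = x₀` and launch angle `α ∈ (−π/2, π/2)` moves
along the elliptical orbit `P_α(t) = (x₀ cos t + x₀ cos α sin t, x₀ sin α sin t)`.  With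
`F_α = (x₀ √(cos α (1 + cos α)), x₀ sin α √(cos α)/√(1 + cos α))`, every orbit point satisfies
`dist (P_α t) F_α + dist (P_α t) (−F_α) = 2 x₀ √(1 + cos α)`; that is, `F_α` and `−F_α` are
the foci of the orbit and the sum of focal distances equals twice the semi-major axis
`x₀ √(1 + cos α)`. -/
theorem oscillator_focus_formula (x₀ α : ℝ) (hx₀ : 0 < x₀)
    (hα : α ∈ Set.Ioo (-(π / 2)) (π / 2))
    (P : ℝ → EuclideanSpace ℝ (Fin 2))
    (hP : ∀ t, P t = pt (x₀ * Real.cos t + x₀ * Real.cos α * Real.sin t)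
                       (x₀ * Real.sin α * Real.sin t))
    (F : EuclideanSpace ℝ (Fin 2))
    (hF : F = pt (x₀ * Real.sqrt (Real.cos α * (1 + Real.cos α)))
                 (x₀ * Real.sin α * Real.sqrt (Real.cos α) / Real.sqrt (1 + Real.cos α))) :
    ∀ t : ℝ, dist (P t) F + dist (P t) (-F) = 2 * x₀ * Real.sqrt (1 + Real.cos α) := by
  obtain rfl : P = orbit x₀ α := funext hP
  obtain rfl : F = focus x₀ α := hF
  have hc : 0 ≤ cos α := (cos_pos_of_mem_Ioo hα).le
  intro t
  rw [dist_add_dist_neg_eq_of_inner_eq_mul (inner_orbit_focus hc t)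
    (norm_orbit_sq_add_norm_focus_sq hc t) (abs_focal_offset_le hx₀.le hc t), mul_assoc]
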